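/- arXiv:0910.1013 — 3 statements merged into one kernel-verified Lean document; each statement's English description precedes it below -/
import Mathlib

section
/- There is a bijection between symmetric positive semidefinite kernels K : X × X → ℝ and reproducing kernel Hilbert spaces of real functions on X: every RKHS has a unique reproducing kernel, which is positive semidefinite, and every positive semidefinite kernel is the reproducing kernel of a unique RKHS. -/
open scoped BigOperators

/-- A reproducing kernel Hilbert space on `X` with kernel `K`: an abstract
Hilbert space `H` together with an injective linear map `e` into the pointwise
defined functions on `X`, such that every evaluation functional is represented
(hence continuous) by an element `kx` with `e kx = K x ·`. -/
structure RKHSOn (X : Type) (K : X → X → ℝ) where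
  H : Type
  [grp : NormedAddCommGroup H]
  [ip : InnerProductSpace ℝ H]
  [comp : CompleteSpace H]
  e : H →ₗ[ℝ] X → ℝ
  inj : Function.Injective e
  repr : ∀ x : X, ∃ kx : H, e kx = K x ∧ ∀ f : H, e f x = inner ℝ kx f

attribute [instance] RKHSOn.grp RKHSOn.ip RKHSOn.comp

/-!
If `kₓ` represents evaluation at `x`, then `K x y = ⟪kₓ, k_y⟫`: the kernel of a RKHS is the Gram
kernel of its representers, hence symmetric and positive semidefinite, and the representers (so
also the kernel) are determined by the realization map `e`. Injectivity of `e` says exactly that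
the `kₓ` span a dense subspace. Two RKHS with the same kernel therefore contain dense subspaces
spanned by families with the same Gram matrix; the resulting isometry between them extends to the
whole spaces. Conversely, for a positive semidefinite kernel `K`, completing `X →₀ ℝ` for the
semi-inner product `⟨α, β⟩ = ∑ αₓ β_y K x y` and taking `kₓ` to be the image of `single x 1`
yields a RKHS with kernel `K`.
-/

section

open Submodule Finsupp
open scoped InnerProductSpace

variable {X : Type}

structure IsPosSemidefKernel (K : X → X → ℝ) : Prop where
  symm : ∀ x y, K x y = K y x
  nonneg : ∀ (n : ℕ) (x : Fin n → X) (α : Fin n → ℝ), 0 ≤ ∑ i, ∑ j, α i * α j * K (x i) (x j)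

noncomputable def kernelForm (K : X → X → ℝ) : LinearMap.BilinForm ℝ (X →₀ ℝ) :=
  linearCombination ℝ fun x => linearCombination ℝ (K x)

lemma kernelForm_apply (K : X → X → ℝ) (α β : X →₀ ℝ) :
    kernelForm K α β = α.sum fun x a => β.sum fun y b => a * b * K x y := by
  simp [kernelForm, linearCombination_apply, Finsupp.sum, LinearMap.sum_apply, Finset.mul_sum,
    mul_assoc]

lemma kernelForm_single_single (K : X → X → ℝ) (x y : X) :
    kernelForm K (single x 1) (single y 1) = K x y := by
  simp [kernelForm]

namespace IsPosSemidefKernel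

variable {K : X → X → ℝ}

lemma finset_sum_nonneg (hK : IsPosSemidefKernel K) (s : Finset X) (c : X → ℝ) :
    0 ≤ ∑ x ∈ s, ∑ y ∈ s, c x * c y * K x y := by
  have reindex (g : X → ℝ) : ∑ x ∈ s, g x = ∑ i, g (s.equivFin.symm i) := by
    rw [← Finset.sum_coe_sort, ← s.equivFin.symm.sum_comp]
  simpa only [reindex] using
    hK.nonneg s.card (fun i => s.equivFin.symm i) fun i => c (s.equivFin.symm i)

lemma kernelForm_self_nonneg (hK : IsPosSemidefKernel K) (α : X →₀ ℝ) :
    0 ≤ kernelForm K α α := by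
  simpa only [kernelForm_apply, Finsupp.sum] using hK.finset_sum_nonneg α.support α

lemma kernelForm_comm (hK : IsPosSemidefKernel K) (α β : X →₀ ℝ) :
    kernelForm K α β = kernelForm K β α := by
  simp only [kernelForm_apply, Finsupp.sum]
  rw [Finset.sum_comm]
  exact Finset.sum_congr rfl fun y _ => Finset.sum_congr rfl fun x _ => by rw [hK.symm]; ring

end IsPosSemidefKernel

section InnerEval

variable {H : Type} [NormedAddCommGroup H] [InnerProductSpace ℝ H]

lemma isPosSemidefKernel_inner (k : X → H) : IsPosSemidefKernel fun x y => ⟪k x, k y⟫_ℝ where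
  symm x y := real_inner_comm _ _
  nonneg n x α := by
    have h : ⟪∑ i, α i • k (x i), ∑ i, α i • k (x i)⟫_ℝ =
        ∑ i, ∑ j, α i * α j * ⟪k (x i), k (x j)⟫_ℝ := by
      simp only [sum_inner, inner_sum, real_inner_smul_left, real_inner_smul_right]
      exact Finset.sum_congr rfl fun i _ => Finset.sum_congr rfl fun j _ => by
        rw [real_inner_comm]; ring
    exact h ▸ real_inner_self_nonneg

lemma inner_linearCombination (k : X → H) (α β : X →₀ ℝ) :
    ⟪linearCombination ℝ k α, linearCombination ℝ k β⟫_ℝ =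
      kernelForm (fun x y => ⟪k x, k y⟫_ℝ) α β := by
  simp only [kernelForm_apply, linearCombination_apply, Finsupp.sum, sum_inner, inner_sum,
    real_inner_smul_left, real_inner_smul_right]
  rw [Finset.sum_comm]
  exact Finset.sum_congr rfl fun x _ => Finset.sum_congr rfl fun y _ => by ring

noncomputable def innerEval (k : X → H) : H →ₗ[ℝ] X → ℝ := LinearMap.pi fun x => innerₛₗ ℝ (k x)

@[simp]
lemma innerEval_apply (k : X → H) (f : H) (x : X) : innerEval k f x = ⟪k x, f⟫_ℝ := rfl

lemma innerEval_injective : Function.Injective (innerEval : (X → H) → H →ₗ[ℝ] X → ℝ) :=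
  fun _ _ h => funext fun x => ext_inner_right ℝ fun f => congrFun (LinearMap.congr_fun h f) x

lemma ker_innerEval (k : X → H) : LinearMap.ker (innerEval k) = (span ℝ (Set.range k))ᗮ := by
  ext f
  rw [LinearMap.mem_ker, ← span_singleton_le_iff_mem, ← isOrtho_iff_le, isOrtho_comm,
    isOrtho_span]
  simp [funext_iff]

lemma denseRange_linearCombination_iff_injective_innerEval [CompleteSpace H] (k : X → H) :
    DenseRange (linearCombination ℝ k) ↔ Function.Injective (innerEval k) := by
  rw [DenseRange, ← LinearMap.coe_range, range_linearCombination,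
    dense_iff_topologicalClosure_eq_top, topologicalClosure_eq_top_iff, ← ker_innerEval,
    LinearMap.ker_eq_bot]

end InnerEval

namespace IsPosSemidefKernel

variable {K : X → X → ℝ}

/-- `kernelForm K` is only semidefinite here; its null vectors are identified in the (Hausdorff)
completion. -/
def PreHilbert (_ : IsPosSemidefKernel K) : Type := X →₀ ℝ

variable (hK : IsPosSemidefKernel K)

noncomputable instance : AddCommGroup hK.PreHilbert := inferInstanceAs (AddCommGroup (X →₀ ℝ))

noncomputable instance : Module ℝ hK.PreHilbert := inferInstanceAs (Module ℝ (X →₀ ℝ))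

noncomputable def toPreHilbert : (X →₀ ℝ) ≃ₗ[ℝ] hK.PreHilbert := LinearEquiv.refl ℝ _

noncomputable instance innerCore : PreInnerProductSpace.Core ℝ hK.PreHilbert where
  inner α β := kernelForm K α β
  conj_inner_symm α β := hK.kernelForm_comm β α
  re_inner_nonneg α := hK.kernelForm_self_nonneg α
  add_left α β γ := LinearMap.map_add₂ _ α β γ
  smul_left α β r := LinearMap.map_smul₂ _ r α β

noncomputable instance : SeminormedAddCommGroup hK.PreHilbert :=
  InnerProductSpace.Core.toSeminormedAddCommGroup (c := hK.innerCore)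

noncomputable instance : InnerProductSpace ℝ hK.PreHilbert :=
  InnerProductSpace.ofCore hK.innerCore

lemma inner_toPreHilbert (α β : X →₀ ℝ) :
    ⟪hK.toPreHilbert α, hK.toPreHilbert β⟫_ℝ = kernelForm K α β := rfl

noncomputable def kernelVec (x : X) : UniformSpace.Completion hK.PreHilbert :=
  hK.toPreHilbert (single x 1)

lemma inner_kernelVec (x y : X) : ⟪hK.kernelVec x, hK.kernelVec y⟫_ℝ = K x y := by
  rw [kernelVec, kernelVec, UniformSpace.Completion.inner_coe, inner_toPreHilbert,
    kernelForm_single_single]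

lemma linearCombination_kernelVec :
    linearCombination ℝ hK.kernelVec =
      UniformSpace.Completion.toComplₗᵢ.toLinearMap ∘ₗ hK.toPreHilbert.toLinearMap := by
  ext x
  simp [kernelVec]

lemma denseRange_linearCombination_kernelVec :
    DenseRange (linearCombination ℝ hK.kernelVec) := by
  rw [hK.linearCombination_kernelVec]
  exact UniformSpace.Completion.denseRange_coe.comp hK.toPreHilbert.surjective.denseRange
    (UniformSpace.Completion.continuous_coe _)

noncomputable def rkhsOn : RKHSOn X K where
  H := UniformSpace.Completion hK.PreHilbert
  e := innerEval hK.kernelVec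
  inj := (denseRange_linearCombination_iff_injective_innerEval _).1
    hK.denseRange_linearCombination_kernelVec
  repr x := ⟨hK.kernelVec x,
    funext fun y => by rw [innerEval_apply, inner_kernelVec, hK.symm], fun _ => rfl⟩

end IsPosSemidefKernel

namespace RKHSOn

variable {K : X → X → ℝ}

lemma exists_eq_innerEval (R : RKHSOn X K) :
    ∃ k : X → R.H, R.e = innerEval k ∧ (fun x y => ⟪k x, k y⟫_ℝ) = K := by
  choose k hk hek using R.repr
  have he : R.e = innerEval k := LinearMap.ext fun f => funext fun x => hek x f
  refine ⟨k, he, funext fun x => funext fun y => ?_⟩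
  rw [real_inner_comm, ← innerEval_apply, ← he, hk]

lemma isPosSemidefKernel (R : RKHSOn X K) : IsPosSemidefKernel K := by
  obtain ⟨k, -, hk⟩ := R.exists_eq_innerEval
  exact hk ▸ isPosSemidefKernel_inner k

lemma kernel_unique (R : RKHSOn X K) {K' : X → X → ℝ}
    (h : ∀ x, ∃ kx : R.H, R.e kx = K' x ∧ ∀ f : R.H, R.e f x = ⟪kx, f⟫_ℝ) : K' = K := by
  obtain ⟨k, he, hk⟩ := R.exists_eq_innerEval
  obtain ⟨k', he', hk'⟩ := ({ R with repr := h } : RKHSOn X K').exists_eq_innerEval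
  rw [← hk, ← hk', innerEval_injective (he'.symm.trans he)]

lemma exists_linearIsometryEquiv (R₁ R₂ : RKHSOn X K) :
    ∃ φ : R₁.H ≃ₗᵢ[ℝ] R₂.H, ∀ f, R₂.e (φ f) = R₁.e f := by
  obtain ⟨k₁, he₁, hk₁⟩ := R₁.exists_eq_innerEval
  obtain ⟨k₂, he₂, hk₂⟩ := R₂.exists_eq_innerEval
  have hdense₁ := (denseRange_linearCombination_iff_injective_innerEval k₁).2 (he₁ ▸ R₁.inj)
  have hdense₂ := (denseRange_linearCombination_iff_injective_innerEval k₂).2 (he₂ ▸ R₂.inj)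
  have hnorm (α : X →₀ ℝ) : ‖linearCombination ℝ k₂ α‖ = ‖linearCombination ℝ k₁ α‖ := by
    rw [norm_eq_sqrt_real_inner, norm_eq_sqrt_real_inner, inner_linearCombination,
      inner_linearCombination, hk₁, hk₂]
  set φ := (LinearEquiv.refl ℝ (X →₀ ℝ)).extendOfIsometry _ _ hdense₁ hdense₂ hnorm
  have hφ (x : X) : φ (k₁ x) = k₂ x := by
    simpa using (LinearEquiv.refl ℝ (X →₀ ℝ)).extendOfIsometry_eq _ _ hdense₁ hdense₂ hnorm
      (single x 1)
  refine ⟨φ, fun f => ?_⟩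
  ext x
  rw [he₁, he₂, innerEval_apply, innerEval_apply, ← hφ, LinearIsometryEquiv.inner_map_map]

end RKHSOn

end

/-- Bijection between symmetric positive semidefinite kernels and reproducing
kernel Hilbert spaces: the kernel of a RKHS is unique, symmetric and positive
semidefinite; conversely every symmetric positive semidefinite kernel is the
reproducing kernel of a RKHS which is unique up to an isometric isomorphism
compatible with the realizations as functions on `X`. -/
theorem stmt_3 {X : Type} :
    (∀ (K : X → X → ℝ) (R : RKHSOn X K),
      -- the kernel of a RKHS is symmetric and positive semidefinite
      ((∀ x y : X, K x y = K y x) ∧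
        ∀ (n : ℕ) (x : Fin n → X) (α : Fin n → ℝ),
          0 ≤ ∑ i, ∑ j, α i * α j * K (x i) (x j)) ∧
      -- a given RKHS has a unique reproducing kernel
      (∀ K' : X → X → ℝ,
        (∀ x : X, ∃ kx : R.H, R.e kx = K' x ∧ ∀ f : R.H, R.e f x = inner ℝ kx f) →
        K' = K)) ∧
    -- every symmetric positive semidefinite kernel has a RKHS, unique up to
    -- an isometric isomorphism commuting with the realization maps
    (∀ K : X → X → ℝ, (∀ x y : X, K x y = K y x) →
      (∀ (n : ℕ) (x : Fin n → X) (α : Fin n → ℝ),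
        0 ≤ ∑ i, ∑ j, α i * α j * K (x i) (x j)) →
      Nonempty (RKHSOn X K) ∧
        ∀ R₁ R₂ : RKHSOn X K, ∃ φ : R₁.H ≃ₗᵢ[ℝ] R₂.H, ∀ f : R₁.H, R₂.e (φ f) = R₁.e f) := by
  refine ⟨fun K R => ⟨?_, fun K' h => R.kernel_unique h⟩, fun K hsymm hpsd => ?_⟩
  · exact ⟨R.isPosSemidefKernel.symm, R.isPosSemidefKernel.nonneg⟩
  · exact ⟨⟨IsPosSemidefKernel.rkhsOn ⟨hsymm, hpsd⟩⟩, RKHSOn.exists_linearIsometryEquiv⟩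
end

section
/- Let (e_i)_{i∈I} be an orthonormal basis of L²(X, μ) with I countable, and let (α_i)_{i∈I} be reals with ∑_i α_i² < ∞. Then K(x,y) = ∑_i α_i² e_i(x) e_i(y) is a positive semidefinite kernel, and the closed unit ball of the associated RKHS equals the Schmidt ellipsoid {f = ∑_i f_i e_i ∈ L² : ∑_i (f_i/α_i)² ≤ 1} (with convention f_i = 0 whenever α_i = 0). -/
set_option maxHeartbeats 1000000

open scoped BigOperators

/-!
The RKHS is `ℓ²(J)`, `J = {i | αᵢ ≠ 0}`, with feature map `x ↦ (αᵢ εᵢ(x))ᵢ`: an element `g`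
acts as the function `x ↦ ∑ αᵢ gᵢ εᵢ(x)`, and `K(x, y)` is the inner product of the features of
`x` and `y`, so `K` is positive semidefinite. The function of `g` has coordinates `cᵢ = αᵢ gᵢ` in
the basis `(eᵢ)`, whence `‖g‖² = ∑ (cᵢ / αᵢ)²`. Conversely the coordinates are determined by the
function: a series converging in `L²` converges almost everywhere along a subsequence, so at most
one square-summable `c` has pointwise sums `∑ cᵢ εᵢ(x)` equal to a given function. This gives
both the injectivity needed for an RKHS and the inclusion of the ellipsoid in the unit ball.
-/

open MeasureTheory Filter Topology Function
open scoped RealInnerProductSpace ENNReal lp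

theorem memℓp_two_iff_summable_sq {ι : Type*} {f : ι → ℝ} :
    Memℓp f 2 ↔ Summable fun i => f i ^ 2 := by
  simp [memℓp_gen_iff (p := 2) (by norm_num)]

theorem Summable.mul_of_summable_sq {ι : Type*} {u v : ι → ℝ} (hu : Summable fun i => u i ^ 2)
    (hv : Summable fun i => v i ^ 2) : Summable fun i => u i * v i :=
  .of_norm_bounded ((hu.add hv).div_const 2) fun i => by
    rw [norm_mul, Real.norm_eq_abs, Real.norm_eq_abs, le_div_iff₀ two_pos, ← sq_abs (u i),
      ← sq_abs (v i)]
    linarith [two_mul_le_add_sq |u i| |v i|]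

theorem MeasureTheory.Lp.ae_eq_of_hasSum {X E ι : Type*} [MeasurableSpace X] {μ : Measure X}
    [NormedAddCommGroup E] {p : ℝ≥0∞} [Fact (1 ≤ p)] [Countable ι] {v : ι → Lp E p μ}
    {L : Lp E p μ} (hL : HasSum v L) {φ : ι → X → E} (hφ : ∀ i, v i =ᵐ[μ] φ i) {f : X → E}
    (hf : ∀ᵐ x ∂μ, HasSum (fun i => φ i x) (f x)) : L =ᵐ[μ] f := by
  obtain ⟨s, hs⟩ := (atTop : Filter (Finset ι)).exists_seq_tendsto
  obtain ⟨n, hn_mono, hn⟩ :=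
    (tendstoInMeasure_of_tendsto_Lp (hL.comp hs)).exists_seq_tendsto_ae
  have hpartial : ∀ᵐ x ∂μ, ∀ k, (∑ i ∈ s k, v i) x = ∑ i ∈ s k, φ i x := by
    refine ae_all_iff.2 fun k => (Lp.coeFn_finsetSum _ _).trans ?_
    filter_upwards [ae_all_iff.2 hφ] with x hx
    simp [hx]
  filter_upwards [hn, hpartial, hf] with x hxL hx hxf
  refine tendsto_nhds_unique hxL ?_
  simpa only [comp_def, hx] using (hxf.comp hs).comp hn_mono.tendsto_atTop

theorem HilbertBasis.eq_of_hasSum_mul {X I 𝕜 : Type*} [RCLike 𝕜] [MeasurableSpace X]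
    {μ : Measure X} [Countable I] (b : HilbertBasis I 𝕜 (Lp 𝕜 2 μ)) {ε : I → X → 𝕜}
    (hε : ∀ i, (b i : Lp 𝕜 2 μ) =ᵐ[μ] ε i) {c c' : ℓ²(I, 𝕜)} {f : X → 𝕜}
    (hc : ∀ᵐ x ∂μ, HasSum (fun i => c i * ε i x) (f x))
    (hc' : ∀ᵐ x ∂μ, HasSum (fun i => c' i * ε i x) (f x)) : c = c' := by
  have repr_symm_ae_eq : ∀ d : ℓ²(I, 𝕜), (∀ᵐ x ∂μ, HasSum (fun i => d i * ε i x) (f x)) →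
      b.repr.symm d =ᵐ[μ] f := fun d hd =>
    Lp.ae_eq_of_hasSum (b.hasSum_repr_symm d)
      (fun i => (Lp.coeFn_smul _ _).trans ((hε i).mono fun x hx => by simp [hx])) hd
  exact b.repr.symm.injective <| Lp.ext <|
    (repr_symm_ae_eq c hc).trans (repr_symm_ae_eq c' hc').symm

theorem sum_sum_mul_inner_nonneg {ι H : Type*} [Fintype ι] [NormedAddCommGroup H]
    [InnerProductSpace ℝ H] (v : ι → H) (c : ι → ℝ) :
    0 ≤ ∑ i, ∑ j, c i * c j * ⟪v i, v j⟫ := by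
  have h : ∑ i, ∑ j, c i * c j * ⟪v i, v j⟫ = ⟪∑ i, c i • v i, ∑ j, c j • v j⟫ := by
    simp_rw [sum_inner, inner_sum, real_inner_smul_left, real_inner_smul_right, mul_assoc]
  exact h ▸ real_inner_self_nonneg

noncomputable def RKHSOn.ofFeatureMap {X : Type} {K : X → X → ℝ} {H : Type}
    [NormedAddCommGroup H] [InnerProductSpace ℝ H] [CompleteSpace H] (Φ : X → H)
    (hK : ∀ x y, K x y = ⟪Φ x, Φ y⟫)
    (hinj : Injective fun g x => ⟪Φ x, g⟫) : RKHSOn X K where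
  H := H
  e := LinearMap.pi fun x => innerₛₗ ℝ (Φ x)
  inj := hinj
  repr x := ⟨Φ x, funext fun y => by simp [hK, real_inner_comm], fun _ => rfl⟩

theorem hasSum_subtype_support_iff {ι M N : Type*} [AddCommMonoid M] [TopologicalSpace M]
    [Zero N] {α : ι → N} {f : ι → M} {a : M} (hf : ∀ i, α i = 0 → f i = 0) :
    HasSum (fun j : support α => f j) a ↔ HasSum f a :=
  hasSum_subtype_iff_of_support_subset fun i => mt (hf i)

section Schmidt

variable {X I : Type*} (α : I → ℝ) (ε : I → X → ℝ)

theorem memℓp_two_of_summable_div_sq (hα : Summable fun i => α i ^ 2) {c : I → ℝ}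
    (hc0 : ∀ i, α i = 0 → c i = 0) (hc : Summable fun i => (c i / α i) ^ 2) : Memℓp c 2 := by
  refine memℓp_two_iff_summable_sq.2 <| (hα.mul_left (∑' i, (c i / α i) ^ 2)).of_nonneg_of_le
    (fun i => sq_nonneg _) fun i => ?_
  by_cases h : α i = 0
  · simp [hc0 i h, h]
  calc c i ^ 2 = (c i / α i) ^ 2 * α i ^ 2 := by field_simp
    _ ≤ _ := mul_le_mul_of_nonneg_right (hc.le_tsum i fun _ _ => sq_nonneg _) (sq_nonneg _)

theorem summable_mul_of_summable_div_sq (hαε : ∀ x, Summable fun i => (α i * ε i x) ^ 2)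
    {c : I → ℝ} (hc0 : ∀ i, α i = 0 → c i = 0) (hc : Summable fun i => (c i / α i) ^ 2) (x : X) :
    Summable fun i => c i * ε i x :=
  (hc.mul_of_summable_sq (hαε x)).congr fun i => by
    by_cases h : α i = 0
    · simp [h, hc0 i h]
    · field_simp

/-- Indexed by the `i` with `αᵢ ≠ 0` so that the induced map to functions on `X` is injective. -/
noncomputable def schmidtFeature (hαε : ∀ x, Summable fun i => (α i * ε i x) ^ 2) (x : X) :
    ℓ²(support α, ℝ) :=
  ⟨fun j => α j * ε j x, memℓp_two_iff_summable_sq.2 ((hαε x).subtype _)⟩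

theorem hasSum_inner_schmidtFeature (hαε : ∀ x, Summable fun i => (α i * ε i x) ^ 2)
    (g : ℓ²(support α, ℝ)) (x : X) :
    HasSum (fun j : support α => α j * g j * ε j x) ⟪schmidtFeature α ε hαε x, g⟫ := by
  have h := lp.hasSum_inner (𝕜 := ℝ) (schmidtFeature α ε hαε x) g
  simp only [RCLike.inner_apply, conj_trivial] at h
  have hterm : (fun j => g j * schmidtFeature α ε hαε x j) =
      fun j : support α => α j * g j * ε j x :=
    funext fun j => (mul_left_comm _ _ _).trans (mul_assoc _ _ _).symm
  rwa [hterm] at h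

theorem inner_schmidtFeature (hαε : ∀ x, Summable fun i => (α i * ε i x) ^ 2) (x y : X) :
    ⟪schmidtFeature α ε hαε x, schmidtFeature α ε hαε y⟫ = ∑' i, α i ^ 2 * ε i x * ε i y := by
  rw [real_inner_comm, ← (hasSum_inner_schmidtFeature α ε hαε _ y).tsum_eq,
    ← tsum_subtype_eq_of_support_subset (s := support α) fun i => mt fun h => by simp [h]]
  exact tsum_congr fun j => by simp only [schmidtFeature]; ring

/-- The coordinates `αᵢ gᵢ` in the basis `(eᵢ)` of the function `x ↦ ⟪schmidtFeature x, g⟫`. -/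
noncomputable def schmidtCoeff (g : ℓ²(support α, ℝ)) (i : I) : ℝ :=
  if h : α i = 0 then 0 else α i * g ⟨i, h⟩

variable {α} in
theorem schmidtCoeff_of_eq_zero (g : ℓ²(support α, ℝ)) {i : I} (h : α i = 0) :
    schmidtCoeff α g i = 0 :=
  dif_pos h

theorem schmidtCoeff_coe (g : ℓ²(support α, ℝ)) (j : support α) :
    schmidtCoeff α g j = α j * g j :=
  dif_neg j.2

theorem hasSum_schmidtCoeff_mul (hαε : ∀ x, Summable fun i => (α i * ε i x) ^ 2)
    (g : ℓ²(support α, ℝ)) (x : X) :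
    HasSum (fun i => schmidtCoeff α g i * ε i x) ⟪schmidtFeature α ε hαε x, g⟫ := by
  refine (hasSum_subtype_support_iff (α := α) fun i h => ?_).1 ?_
  · simp [schmidtCoeff_of_eq_zero g h]
  · simpa only [comp_def, schmidtCoeff_coe] using hasSum_inner_schmidtFeature α ε hαε g x

theorem hasSum_schmidtCoeff_div_sq (g : ℓ²(support α, ℝ)) :
    HasSum (fun i => (schmidtCoeff α g i / α i) ^ 2) (‖g‖ ^ 2) := by
  refine (hasSum_subtype_support_iff (α := α) fun i h => ?_).1 ?_
  · simp [h]
  · have h := lp.hasSum_inner (𝕜 := ℝ) g g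
    simp only [RCLike.inner_apply, conj_trivial, real_inner_self_eq_norm_sq] at h
    have hcoe : ∀ j : support α, schmidtCoeff α g j / α j = g j := fun j => by
      rw [schmidtCoeff_coe, mul_div_cancel_left₀ _ j.2]
    simpa only [hcoe, sq] using h

variable {α ε}

theorem injective_inner_schmidtFeature [MeasurableSpace X] {μ : Measure X} [Countable I]
    (b : HilbertBasis I ℝ (Lp ℝ 2 μ)) (hε : ∀ i, (b i : Lp ℝ 2 μ) =ᵐ[μ] ε i)
    (hα : Summable fun i => α i ^ 2) (hαε : ∀ x, Summable fun i => (α i * ε i x) ^ 2) :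
    Injective fun g x => ⟪schmidtFeature α ε hαε x, g⟫ := by
  intro g g' hgg'
  replace hgg' : ∀ x, ⟪schmidtFeature α ε hαε x, g⟫ = ⟪schmidtFeature α ε hαε x, g'⟫ :=
    congrFun hgg'
  have hmem : ∀ g, Memℓp (schmidtCoeff α g) 2 := fun g =>
    memℓp_two_of_summable_div_sq α hα (fun _ => schmidtCoeff_of_eq_zero g)
      (hasSum_schmidtCoeff_div_sq α g).summable
  have hcoeff : schmidtCoeff α g = schmidtCoeff α g' :=
    congrArg (⇑) <| b.eq_of_hasSum_mul hε (c := ⟨_, hmem g⟩) (c' := ⟨_, hmem g'⟩)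
      (ae_of_all _ (hasSum_schmidtCoeff_mul α ε hαε g))
      (ae_of_all _ fun x => hgg' x ▸ hasSum_schmidtCoeff_mul α ε hαε g' x)
  refine lp.ext (funext fun j => mul_left_cancel₀ j.2 ?_)
  simpa only [schmidtCoeff_coe] using congrFun hcoeff j

theorem eq_schmidtCoeff_of_tsum [MeasurableSpace X] {μ : Measure X} [Countable I]
    (b : HilbertBasis I ℝ (Lp ℝ 2 μ)) (hε : ∀ i, (b i : Lp ℝ 2 μ) =ᵐ[μ] ε i)
    (hα : Summable fun i => α i ^ 2) (hαε : ∀ x, Summable fun i => (α i * ε i x) ^ 2)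
    {g : ℓ²(support α, ℝ)} {c : I → ℝ} (hc0 : ∀ i, α i = 0 → c i = 0)
    (hc : Summable fun i => (c i / α i) ^ 2)
    (hcg : ∀ x, ⟪schmidtFeature α ε hαε x, g⟫ = ∑' i, c i * ε i x) :
    c = schmidtCoeff α g :=
  congrArg (⇑) <| b.eq_of_hasSum_mul hε
    (c := ⟨c, memℓp_two_of_summable_div_sq α hα hc0 hc⟩)
    (c' := ⟨_, memℓp_two_of_summable_div_sq α hα (fun _ => schmidtCoeff_of_eq_zero g)
      (hasSum_schmidtCoeff_div_sq α g).summable⟩)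
    (ae_of_all _ fun x => hcg x ▸ (summable_mul_of_summable_div_sq α ε hαε hc0 hc x).hasSum)
    (ae_of_all _ (hasSum_schmidtCoeff_mul α ε hαε g))

end Schmidt

/-- Schmidt ellipsoid: given an orthonormal basis `(eᵢ)` of `L²(X,μ)` (with
pointwise defined representatives `ε i`), `I` countable, and square-summable
weights `(αᵢ)`, the kernel `K(x,y) = ∑ᵢ αᵢ² εᵢ(x) εᵢ(y)` is positive
semidefinite, and the closed unit ball of the associated RKHS is the Schmidt
ellipsoid `{f = ∑ᵢ fᵢ eᵢ : ∑ᵢ (fᵢ/αᵢ)² ≤ 1}` (with `fᵢ = 0` whenever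
`αᵢ = 0`). -/
theorem stmt_9 {X : Type} [MeasurableSpace X] (μ : MeasureTheory.Measure X)
    {I : Type} [Countable I] (b : HilbertBasis I ℝ (MeasureTheory.Lp ℝ 2 μ))
    (ε : I → X → ℝ) (hε : ∀ i : I, (b i : MeasureTheory.Lp ℝ 2 μ) =ᵐ[μ] ε i)
    (α : I → ℝ) (hα : Summable fun i : I => α i ^ 2)
    (K : X → X → ℝ) (hKsum : ∀ x y : X, Summable fun i : I => α i ^ 2 * ε i x * ε i y)
    (hK : ∀ x y : X, K x y = ∑' i : I, α i ^ 2 * ε i x * ε i y) :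
    (∀ (n : ℕ) (x : Fin n → X) (c : Fin n → ℝ),
        0 ≤ ∑ i, ∑ j, c i * c j * K (x i) (x j)) ∧
      ∃ R : RKHSOn X K, ∀ g : R.H,
        (‖g‖ ≤ 1 ↔ ∃ c : I → ℝ,
          (∀ i : I, α i = 0 → c i = 0) ∧
          (Summable fun i : I => (c i / α i) ^ 2) ∧
          (∑' i : I, (c i / α i) ^ 2) ≤ 1 ∧
          ∀ x : X, R.e g x = ∑' i : I, c i * ε i x) := by
  have hαε : ∀ x, Summable fun i => (α i * ε i x) ^ 2 := fun x =>
    (hKsum x x).congr fun i => by ring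
  have hKΦ : ∀ x y, K x y = ⟪schmidtFeature α ε hαε x, schmidtFeature α ε hαε y⟫ :=
    fun x y => (hK x y).trans (inner_schmidtFeature α ε hαε x y).symm
  refine ⟨fun n x c => ?_, RKHSOn.ofFeatureMap _ hKΦ (injective_inner_schmidtFeature b hε hα hαε),
    fun g => ⟨fun hg => ?_, ?_⟩⟩
  · simpa only [hKΦ] using sum_sum_mul_inner_nonneg (fun i => schmidtFeature α ε hαε (x i)) c
  · have hnorm := hasSum_schmidtCoeff_div_sq α g
    exact ⟨schmidtCoeff α g, fun i => schmidtCoeff_of_eq_zero g, hnorm.summable,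
      hnorm.tsum_eq ▸ pow_le_one₀ (norm_nonneg g) hg,
      fun x => (hasSum_schmidtCoeff_mul α ε hαε g x).tsum_eq.symm⟩
  · rintro ⟨c, hc0, hcs, hc1, hcg⟩
    obtain rfl := eq_schmidtCoeff_of_tsum b hε hα hαε hc0 hcs hcg
    rw [(hasSum_schmidtCoeff_div_sq α g).tsum_eq] at hc1
    exact (pow_le_one_iff_of_nonneg (norm_nonneg g) two_ne_zero).1 hc1
end

section
/- Let H be a reproducing kernel Hilbert space on X with kernel K, and consider minimizing J(f) = C(f(x₁),…,f(x_n)) + ‖f‖_H² over f ∈ H, where C : ℝⁿ → ℝ is arbitrary and x₁,…,x_n ∈ X. If f* is a minimizer, then f* lies in the span of {K(x₁,·),…,K(x_n,·)}; equivalently, for any f ∈ H, writing f = f₁ + f₂ with f₁ the orthogonal projection onto span{K(x_i,·)}, one has J(f₁) ≤ J(f). -/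
/-!
Projecting `f` orthogonally onto `V = span {K(xᵢ, ·)}` does not change the data `f(xᵢ) = ⟪K(xᵢ, ·), f⟫`,
since `f - f₁ ⊥ V`, while by Pythagoras `‖f‖² = ‖f₁‖² + ‖f - f₁‖²`. So `J(f₁) ≤ J(f)`, and for a
minimizer `f*` the inequality `J(f*) ≤ J(f₁)` forces `‖f* - f₁‖ = 0`, i.e. `f* ∈ V`.
-/

open Submodule

section Projection

variable {𝕜 E : Type*} [RCLike 𝕜] [NormedAddCommGroup E] [InnerProductSpace 𝕜 E]
  (K : Submodule 𝕜 E) [K.HasOrthogonalProjection]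

theorem Submodule.inner_starProjection_right_of_mem {u : E} (hu : u ∈ K) (v : E) :
    inner 𝕜 u (K.starProjection v) = inner 𝕜 u v := by
  have h := K.starProjection_inner_eq_zero v u hu
  rw [inner_eq_zero_symm, inner_sub_right, sub_eq_zero] at h
  exact h.symm

variable {K} {L : E → ℝ} (hL : ∀ v, L (K.starProjection v) = L v)
include hL

theorem Submodule.add_norm_sq_starProjection_le (v : E) :
    L (K.starProjection v) + ‖K.starProjection v‖ ^ 2 ≤ L v + ‖v‖ ^ 2 := by
  rw [hL]
  gcongr
  exact K.norm_starProjection_apply_le v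

theorem Submodule.mem_of_forall_add_norm_sq_le {v : E}
    (hv : ∀ w, L v + ‖v‖ ^ 2 ≤ L w + ‖w‖ ^ 2) : v ∈ K := by
  have hle : ‖v‖ ≤ ‖K.starProjection v‖ := by
    have := hv (K.starProjection v)
    rw [hL] at this
    exact pow_le_pow_iff_left₀ (norm_nonneg _) (norm_nonneg _) two_ne_zero |>.mp (by linarith)
  exact (K.mem_iff_norm_starProjection v).mpr (le_antisymm (K.norm_starProjection_apply_le v) hle)

end Projection

theorem apply_starProjection_of_representer_mem {X H : Type*} [NormedAddCommGroup H]
    [InnerProductSpace ℝ H] (e : H → X → ℝ) (Kx : X → H)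
    (hKx : ∀ (x : X) (f : H), e f x = inner ℝ (Kx x) f)
    (V : Submodule ℝ H) [V.HasOrthogonalProjection] {y : X} (hy : Kx y ∈ V) (f : H) :
    e (V.starProjection f) y = e f y := by
  rw [hKx, hKx, V.inner_starProjection_right_of_mem hy]

theorem stmt_17_general {X H : Type*} [NormedAddCommGroup H] [InnerProductSpace ℝ H]
    (e : H →ₗ[ℝ] X → ℝ)
    (Kx : X → H) (hKx : ∀ (x : X) (f : H), e f x = inner ℝ (Kx x) f)
    (n : ℕ) (x : Fin n → X) (C : (Fin n → ℝ) → ℝ) :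
    (∀ f : H, ∃ f₁ ∈ Submodule.span ℝ (Set.range fun i : Fin n => Kx (x i)),
      (∀ i : Fin n, e f₁ (x i) = e f (x i)) ∧
        C (fun i => e f₁ (x i)) + ‖f₁‖ ^ 2 ≤ C (fun i => e f (x i)) + ‖f‖ ^ 2) ∧
    ∀ fstar : H,
      (∀ f : H, C (fun i => e fstar (x i)) + ‖fstar‖ ^ 2 ≤
          C (fun i => e f (x i)) + ‖f‖ ^ 2) →
      fstar ∈ Submodule.span ℝ (Set.range fun i : Fin n => Kx (x i)) := by
  set V := Submodule.span ℝ (Set.range fun i : Fin n => Kx (x i))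
  have : FiniteDimensional ℝ V := FiniteDimensional.span_of_finite ℝ (Set.finite_range _)
  have hdata (f : H) (i : Fin n) : e (V.starProjection f) (x i) = e f (x i) :=
    apply_starProjection_of_representer_mem e Kx hKx V (subset_span ⟨i, rfl⟩) f
  have hC (f : H) : C (fun i => e (V.starProjection f) (x i)) = C (fun i => e f (x i)) := by
    simp only [hdata]
  refine ⟨fun f => ⟨V.starProjection f, V.starProjection_apply_mem f, hdata f, ?_⟩, fun _ => ?_⟩
  · exact V.add_norm_sq_starProjection_le (L := fun g => C fun i => e g (x i)) hC f
  · exact V.mem_of_forall_add_norm_sq_le (L := fun g => C fun i => e g (x i)) hC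

/-- Representer theorem in a RKHS: when minimizing
`J(f) = C(f(x₁),…,f(xₙ)) + ‖f‖²` over a RKHS `H`, replacing `f` by its
orthogonal projection `f₁` onto `span{K(xᵢ,·)}` leaves the data term
unchanged and does not increase the norm, so `J(f₁) ≤ J(f)`; consequently any
minimizer lies in `span{K(x₁,·),…,K(xₙ,·)}`. -/
theorem stmt_17 {X H : Type*} [NormedAddCommGroup H] [InnerProductSpace ℝ H]
    [CompleteSpace H] (e : H →ₗ[ℝ] X → ℝ) (he : Function.Injective e)
    (Kx : X → H) (hKx : ∀ (x : X) (f : H), e f x = inner ℝ (Kx x) f)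
    (n : ℕ) (x : Fin n → X) (C : (Fin n → ℝ) → ℝ) :
    (∀ f : H, ∃ f₁ ∈ Submodule.span ℝ (Set.range fun i : Fin n => Kx (x i)),
      (∀ i : Fin n, e f₁ (x i) = e f (x i)) ∧
        C (fun i => e f₁ (x i)) + ‖f₁‖ ^ 2 ≤ C (fun i => e f (x i)) + ‖f‖ ^ 2) ∧
    ∀ fstar : H,
      (∀ f : H, C (fun i => e fstar (x i)) + ‖fstar‖ ^ 2 ≤
          C (fun i => e f (x i)) + ‖f‖ ^ 2) →
      fstar ∈ Submodule.span ℝ (Set.range fun i : Fin n => Kx (x i)) :=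
  stmt_17_general e Kx hKx n x C
end
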